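/- Let k ≥ 2 and let w be any nonempty factor of the infinite Fibonacci word with |w| < Φ_k. Then |ShortBord(w)| < Φ_{k-2}. -/

import Mathlib

open List Filter

/-- The Zimin pattern `Z_k` as a word over variables `0, 1, ..., k-1`
(`Z_0` is empty, `Z_{k+1} = Z_k · x_{k+1} · Z_k`). -/
def ziminWord : ℕ → List ℕ
  | 0 => []
  | k + 1 => ziminWord k ++ k :: ziminWord k

/-- `w` is the image of the Zimin pattern `Z_k` under a non-erasing morphism. -/
def IsZiminImage {α : Type*} (k : ℕ) (w : List α) : Prop :=
  ∃ h : ℕ → List α, (∀ i, h i ≠ []) ∧ w = (ziminWord k).flatMap h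

/-- The Zimin type of `w`: the maximum `k` such that `w` is an image of `Z_k`
under a non-erasing morphism (0 for the empty word). -/
noncomputable def ziminType {α : Type*} (w : List α) : ℕ :=
  sSup {k | IsZiminImage k w}

/-- The Zimin pattern `Z_k` embeds in `w`: some factor of `w` is an image of `Z_k`. -/
def ziminEmbeds {α : Type*} (k : ℕ) (w : List α) : Prop :=
  ∃ u : List α, u <:+: w ∧ IsZiminImage k u

/-- Length of the longest border (proper prefix that is also a proper suffix) of `w`. -/
noncomputable def bordLen {α : Type*} (w : List α) : ℕ :=
  sSup {j | w.take j <:+ w ∧ j < w.length}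

/-- Length of the longest short border (border of length `< |w|/2`) of `w`. -/
noncomputable def shortBordLen {α : Type*} (w : List α) : ℕ :=
  sSup {j | w.take j <:+ w ∧ 2 * j < w.length}

/-- The longest border of `w`. -/
noncomputable def bord {α : Type*} (w : List α) : List α := w.take (bordLen w)

/-- The longest short border of `w`. -/
noncomputable def shortBord {α : Type*} (w : List α) : List α := w.take (shortBordLen w)

/-- The Fibonacci words over `Bool` (`a = false`, `b = true`), with
`fibWord 0 = F_0 = a`, `fibWord 1 = F_1 = F_0 F_{-1} = ab`, `F_{n} = F_{n-1} F_{n-2}`. -/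
def fibWord : ℕ → List Bool
  | 0 => [false]
  | 1 => [false, true]
  | n + 2 => fibWord (n + 1) ++ fibWord n

/-- The Fibonacci numbers `Φ_n = |F_n|` (`Φ_0 = 1, Φ_1 = 2, Φ_2 = 3, ...`). -/
def Phi (n : ℕ) : ℕ := (fibWord n).length

/-- The infinite Fibonacci word `F_∞` (0-indexed letters). -/
def fibInf (i : ℕ) : Bool := (fibWord (i + 2)).getD i false

/-- The prefix `F_∞[1..n]` of the infinite Fibonacci word. -/
def fibPrefix (n : ℕ) : List Bool := (List.range n).map fibInf


/-- `w` occurs in the infinite Fibonacci word at (0-indexed) position `i`. -/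
def fibOccursAt (w : List Bool) (i : ℕ) : Prop :=
  w = (List.range w.length).map (fun j => fibInf (i + j))

/-- `w` is a factor of the infinite Fibonacci word. -/
def IsFibFactor (w : List Bool) : Prop := ∃ i, fibOccursAt w i

/-!
The infinite Fibonacci word is the Sturmian word of the golden rotation: its letter at
position `n` is `b` exactly when `⟨(n + 1) φ⟩ < φ⁻²`. A short border of length `j ≥ Φ_{k-2}`
of a factor `w` would make a factor of length `j` reoccur at distance `g = |w| - j`, with
`Φ_{k-2} < g < Φ_{k-1}`. Writing `(g, n)` in the basis of consecutive Fibonacci pairs shows that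
such a `g` has `gφ` at distance more than `φ^{2-k}` from every integer `n`, so the rotation by
`gφ` carries an arc of length `φ^{2-k}` inside `[0, φ⁻²)` out of it; but any `Φ_{k-2}`
consecutive points of the orbit meet every arc of that length, which produces a mismatch.
-/

open scoped goldenRatio

section GoldenRatio

open Real

lemma inv_goldenRatio_eq : φ⁻¹ = φ - 1 := by
  rw [inv_goldenRatio, ← one_sub_goldenConj]; ring

lemma inv_goldenRatio_pos : 0 < φ⁻¹ := inv_pos.mpr goldenRatio_pos

lemma inv_goldenRatio_lt_one : φ⁻¹ < 1 := inv_lt_one_of_one_lt₀ one_lt_goldenRatio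

lemma inv_goldenRatio_sq : φ⁻¹ ^ 2 = 2 - φ := by
  rw [inv_goldenRatio, neg_sq, goldenConj_sq, ← one_sub_goldenConj]; ring

lemma inv_goldenRatio_pow_add_two (k : ℕ) : φ⁻¹ ^ (k + 2) = φ⁻¹ ^ k - φ⁻¹ ^ (k + 1) := by
  rw [pow_add, inv_goldenRatio_sq, pow_succ, inv_goldenRatio_eq]; ring

lemma inv_goldenRatio_pow_lt_pow (k : ℕ) : φ⁻¹ ^ (k + 1) < φ⁻¹ ^ k :=
  pow_lt_pow_right_of_lt_one₀ inv_goldenRatio_pos inv_goldenRatio_lt_one k.lt_succ_self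

lemma abs_goldenConj_pow (k : ℕ) : |ψ ^ k| = φ⁻¹ ^ k := by
  rw [abs_pow, abs_of_neg goldenConj_neg, inv_goldenRatio]

lemma goldenConj_pow_of_even {k : ℕ} (hk : Even k) : ψ ^ k = φ⁻¹ ^ k := by
  rw [inv_goldenRatio, hk.neg_pow]

lemma fib_mul_goldenRatio (k : ℕ) : (Nat.fib k : ℝ) * φ = Nat.fib (k + 1) - ψ ^ k := by
  linarith [fib_succ_sub_goldenRatio_mul_fib k]

lemma goldenRatio_bounds : 1.61 < φ ∧ φ < 1.62 := by
  have h5 := Real.sq_sqrt (show (0 : ℝ) ≤ 5 by norm_num)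
  have h0 := Real.sqrt_nonneg 5
  constructor <;> rw [goldenRatio] <;> nlinarith

end GoldenRatio

section Approximation

open Real

lemma exists_fib_combination (r n : ℤ) : ∀ s : ℕ, ∃ a b : ℤ,
    r = a * Nat.fib (s + 2) + b * Nat.fib (s + 1) ∧ n = a * Nat.fib (s + 3) + b * Nat.fib (s + 2)
  | 0 => ⟨n - r, 2 * r - n, by simp [Nat.fib_add_two]; ring, by simp [Nat.fib_add_two]; ring⟩
  | s + 1 => by
    obtain ⟨a, b, hr, hn⟩ := exists_fib_combination r n s
    refine ⟨b, a - b, ?_, ?_⟩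
    · rw [hr, Nat.fib_add_two (n := s + 1)]; push_cast; ring
    · rw [hn, Nat.fib_add_two (n := s + 2)]; push_cast; ring

lemma abs_mul_goldenRatio_sub_fib_combination (s : ℕ) {a b : ℤ} (hab : a * b ≤ 0) :
    |((a * Nat.fib (s + 2) + b * Nat.fib (s + 1) : ℤ) : ℝ) * φ
        - ((a * Nat.fib (s + 3) + b * Nat.fib (s + 2) : ℤ) : ℝ)|
      = φ⁻¹ ^ (s + 1) * (|(b : ℝ)| + |(a : ℝ)| * φ⁻¹) := by
  have key : ((a * Nat.fib (s + 2) + b * Nat.fib (s + 1) : ℤ) : ℝ) * φ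
      - ((a * Nat.fib (s + 3) + b * Nat.fib (s + 2) : ℤ) : ℝ)
      = -ψ ^ (s + 1) * (b + -(a * φ⁻¹)) := by
    push_cast
    rw [inv_goldenRatio]
    linear_combination (a : ℝ) * fib_mul_goldenRatio (s + 2) + (b : ℝ) * fib_mul_goldenRatio (s + 1)
  have hsign : (0 ≤ (b : ℝ) ∧ 0 ≤ -(a * φ⁻¹)) ∨ ((b : ℝ) ≤ 0 ∧ -(a * φ⁻¹) ≤ 0) := by
    have hφ := inv_goldenRatio_pos
    rcases lt_trichotomy a 0 with ha | rfl | ha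
    · have hb : (0 : ℝ) ≤ b := by exact_mod_cast (by nlinarith : 0 ≤ b)
      have ha' : (a : ℝ) < 0 := by exact_mod_cast ha
      exact .inl ⟨hb, by nlinarith⟩
    · rcases le_total 0 (b : ℝ) with hb | hb <;> simp [hb]
    · have hb : (b : ℝ) ≤ 0 := by exact_mod_cast (by nlinarith : b ≤ 0)
      have ha' : (0 : ℝ) < a := by exact_mod_cast ha
      exact .inr ⟨hb, by nlinarith⟩
  rw [key, abs_mul, abs_neg, abs_goldenConj_pow, (abs_add_eq_add_abs_iff _ _).mpr hsign, abs_neg,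
    abs_mul, abs_of_pos inv_goldenRatio_pos]

lemma fib_combination_mul_nonpos {s : ℕ} {r a b : ℤ}
    (hr : r = a * Nat.fib (s + 2) + b * Nat.fib (s + 1)) (h0 : 0 ≤ r)
    (h1 : r < Nat.fib (s + 3)) : a * b ≤ 0 := by
  have hF1 : (0 : ℤ) < Nat.fib (s + 1) := by exact_mod_cast Nat.fib_pos.mpr (by omega)
  have hF2 : (0 : ℤ) < Nat.fib (s + 2) := by exact_mod_cast Nat.fib_pos.mpr (by omega)
  have hF3 : (Nat.fib (s + 3) : ℤ) = Nat.fib (s + 2) + Nat.fib (s + 1) := by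
    rw [Nat.fib_add_two (n := s + 1)]; push_cast; ring
  by_contra! h
  rcases pos_and_pos_or_neg_and_neg_of_mul_pos h with ⟨ha, hb⟩ | ⟨ha, hb⟩ <;> nlinarith

theorem inv_goldenRatio_pow_le_abs_mul_goldenRatio_sub {s r : ℕ} (n : ℤ) (h1 : 1 ≤ r)
    (h2 : r < Nat.fib (s + 3)) : φ⁻¹ ^ (s + 2) ≤ |(r : ℝ) * φ - n| := by
  obtain ⟨a, b, hr, hn⟩ := exists_fib_combination r n s
  have hab := fib_combination_mul_nonpos hr (by omega) (by exact_mod_cast h2)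
  have hne : a ≠ 0 ∨ b ≠ 0 := by
    by_contra! h; rw [h.1, h.2] at hr; omega
  have hcast : ((r : ℤ) : ℝ) = r := rfl
  rw [← hcast, hr, hn, abs_mul_goldenRatio_sub_fib_combination s hab, pow_succ]
  gcongr
  have := inv_goldenRatio_pos
  have := inv_goldenRatio_lt_one
  rcases hne with ha | hb
  · have : (1 : ℝ) ≤ |(a : ℝ)| := by exact_mod_cast Int.one_le_abs ha
    nlinarith [abs_nonneg (b : ℝ)]
  · have : (1 : ℝ) ≤ |(b : ℝ)| := by exact_mod_cast Int.one_le_abs hb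
    nlinarith [abs_nonneg (a : ℝ)]

theorem inv_goldenRatio_pow_lt_abs_mul_goldenRatio_sub {s r : ℕ} (n : ℤ)
    (h1 : Nat.fib (s + 2) < r) (h2 : r < Nat.fib (s + 3)) : φ⁻¹ ^ s < |(r : ℝ) * φ - n| := by
  obtain ⟨a, b, hr, hn⟩ := exists_fib_combination r n s
  have hab := fib_combination_mul_nonpos hr (by omega) (by exact_mod_cast h2)
  have hF12 : Nat.fib (s + 1) ≤ Nat.fib (s + 2) := Nat.fib_le_fib_succ
  have hF3 : Nat.fib (s + 3) = Nat.fib (s + 2) + Nat.fib (s + 1) := by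
    rw [Nat.fib_add_two (n := s + 1)]; ring
  have hb : b ≠ 0 := by
    rintro rfl
    rcases le_or_gt a 1 with ha | ha
    · have : a * Nat.fib (s + 2) ≤ 1 * Nat.fib (s + 2) := by gcongr
      omega
    · have : 2 * Nat.fib (s + 2) ≤ a * Nat.fib (s + 2) := by gcongr; omega
      omega
  have hbig : 2 ≤ |a| ∨ 2 ≤ |b| := by
    by_contra! h
    obtain ⟨ha1, ha2⟩ := abs_le.mp (by omega : |a| ≤ 1)
    obtain ⟨hb1, hb2⟩ := abs_le.mp (by omega : |b| ≤ 1)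
    interval_cases a <;> interval_cases b <;> omega
  have hcast : ((r : ℤ) : ℝ) = r := rfl
  rw [← hcast, hr, hn, abs_mul_goldenRatio_sub_fib_combination s hab]
  have hsplit : φ⁻¹ ^ s = φ⁻¹ ^ (s + 1) * (1 + φ⁻¹) := by
    linear_combination -inv_goldenRatio_pow_add_two s
  rw [hsplit]
  refine mul_lt_mul_of_pos_left ?_ (pow_pos inv_goldenRatio_pos _)
  have := inv_goldenRatio_pos
  have := inv_goldenRatio_lt_one
  have hb1 : (1 : ℝ) ≤ |(b : ℝ)| := by exact_mod_cast Int.one_le_abs hb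
  rcases hbig with ha | hb2
  · have : (2 : ℝ) ≤ |(a : ℝ)| := by exact_mod_cast ha
    nlinarith
  · have : (2 : ℝ) ≤ |(b : ℝ)| := by exact_mod_cast hb2
    nlinarith [abs_nonneg (a : ℝ)]

end Approximation

lemma Phi_add_two (n : ℕ) : Phi (n + 2) = Phi (n + 1) + Phi n := by
  simp [Phi, fibWord]

lemma Phi_eq_fib : ∀ n, Phi n = Nat.fib (n + 2)
  | 0 => rfl
  | 1 => rfl
  | n + 2 => by
    rw [Phi_add_two, Phi_eq_fib (n + 1), Phi_eq_fib n, Nat.fib_add_two (n := n + 2)]; ring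

section GoldenOrbit

open Real

noncomputable def goldenOrbit (n : ℕ) : ℝ := Int.fract ((n + 1) * φ)

lemma goldenOrbit_add (n g : ℕ) :
    goldenOrbit (n + g) = Int.fract (goldenOrbit n + Int.fract (g * φ)) := by
  rw [goldenOrbit, goldenOrbit, Int.fract_eq_fract]
  exact ⟨⌊(n + 1 : ℝ) * φ⌋ + ⌊(g : ℝ) * φ⌋, by simp only [Int.fract]; push_cast; ring⟩

lemma goldenOrbit_add_fib (n k : ℕ) :
    goldenOrbit (n + Nat.fib k) = Int.fract (goldenOrbit n - ψ ^ k) := by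
  rw [goldenOrbit, goldenOrbit, Int.fract_eq_fract]
  refine ⟨⌊(n + 1 : ℝ) * φ⌋ + Nat.fib (k + 1), ?_⟩
  simp only [Int.fract]
  push_cast
  linear_combination fib_mul_goldenRatio k

lemma goldenOrbit_eq_sub {n : ℕ} {k : ℤ} (h₁ : k ≤ (n + 1) * φ) (h₂ : (n + 1) * φ < k + 1) :
    goldenOrbit n = (n + 1) * φ - k := by
  rw [goldenOrbit, Int.fract, Int.floor_eq_iff.mpr ⟨h₁, h₂⟩]

lemma goldenOrbit_far {s j : ℕ} (hj : j + 2 < Nat.fib (s + 3)) :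
    φ⁻¹ ^ (s + 2) ≤ goldenOrbit j ∧ φ⁻¹ ^ (s + 2) ≤ 1 - goldenOrbit j ∧
      φ⁻¹ ^ (s + 2) ≤ |goldenOrbit j - φ⁻¹ ^ 2| := by
  set N := ⌊(j + 1 : ℝ) * φ⌋
  have hx : goldenOrbit j = (j + 1) * φ - N := rfl
  have hx0 : 0 ≤ goldenOrbit j := Int.fract_nonneg _
  have hx1 : goldenOrbit j < 1 := Int.fract_lt_one _
  have approx := @inv_goldenRatio_pow_le_abs_mul_goldenRatio_sub s
  have h0 := approx (r := j + 1) N (by omega) (by omega)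
  have h1 := approx (r := j + 1) (N + 1) (by omega) (by omega)
  have h2 := approx (r := j + 2) (N + 2) (by omega) (by omega)
  push_cast at h0 h1 h2
  rw [show (j + 1 : ℝ) * φ - N = goldenOrbit j by rw [hx], abs_of_nonneg hx0] at h0
  rw [show (j + 1 : ℝ) * φ - (N + 1) = -(1 - goldenOrbit j) by rw [hx]; ring, abs_neg,
    abs_of_pos (by linarith)] at h1
  rw [show (j + 2 : ℝ) * φ - (N + 2) = goldenOrbit j - φ⁻¹ ^ 2 by
    rw [hx, inv_goldenRatio_sq]; ring] at h2
  exact ⟨h0, h1, h2⟩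

lemma fract_add_lt_iff_of_far {x ε c d : ℝ} (hx₀ : d ≤ x) (hx₁ : d ≤ 1 - x) (hc : d ≤ |x - c|)
    (hε : |ε| < d) : Int.fract (x + ε) < c ↔ x < c := by
  obtain ⟨hε₁, hε₂⟩ := abs_lt.mp hε
  rw [Int.fract_eq_self.mpr ⟨by linarith, by linarith⟩]
  rcases le_abs'.mp hc with h | h <;> constructor <;> intro <;> linarith

lemma goldenOrbit_lt_inv_goldenRatio_sq_iff_of_le_four {n : ℕ} (hn : n ≤ 4) :
    goldenOrbit n < φ⁻¹ ^ 2 ↔ n = 1 ∨ n = 4 := by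
  obtain ⟨hφ₁, hφ₂⟩ := goldenRatio_bounds
  rw [inv_goldenRatio_sq]
  have h (k : ℤ) (h₁ : k ≤ (n + 1) * φ) (h₂ : (n + 1) * φ < k + 1) :
      goldenOrbit n < 2 - φ ↔ (n + 1) * φ - k < 2 - φ := by
    rw [goldenOrbit_eq_sub h₁ h₂]
  interval_cases n
  · rw [h 1 (by norm_num; linarith) (by norm_num; linarith)]; norm_num; linarith
  · rw [h 3 (by norm_num; linarith) (by norm_num; linarith)]; norm_num; linarith
  · rw [h 4 (by norm_num; linarith) (by norm_num; linarith)]; norm_num; linarith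
  · rw [h 6 (by norm_num; linarith) (by norm_num; linarith)]; norm_num; linarith
  · rw [h 8 (by norm_num; linarith) (by norm_num; linarith)]; norm_num; linarith

lemma goldenOrbit_add_fib_lt_iff {m j : ℕ} (hj : j < Nat.fib (m + 2)) :
    goldenOrbit (j + Nat.fib (m + 3)) < φ⁻¹ ^ 2 ↔ goldenOrbit j < φ⁻¹ ^ 2 := by
  -- for `m ≤ 1` the approximation bound is too weak, and the orbit points are computed
  have small := @goldenOrbit_lt_inv_goldenRatio_sq_iff_of_le_four
  rcases m with _ | _ | m
  · obtain rfl : j = 0 := by simpa using hj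
    rw [show 0 + Nat.fib (0 + 3) = 2 from rfl, small (by norm_num), small (by norm_num)]; decide
  · obtain rfl | rfl : j = 0 ∨ j = 1 := by simp [Nat.fib_add_two] at hj; omega
    · rw [show 0 + Nat.fib (0 + 1 + 3) = 3 from rfl, small (by norm_num), small (by norm_num)]
      decide
    · rw [show 1 + Nat.fib (0 + 1 + 3) = 4 from rfl, small (by norm_num), small (by norm_num)]
      decide
  · have hj' : j < Nat.fib (m + 4) := hj
    have hfib : 2 ≤ Nat.fib (m + 3) := Nat.fib_mono (show 3 ≤ m + 3 by omega)
    obtain ⟨h0, h1, h2⟩ := goldenOrbit_far (s := m + 2) (j := j)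
      (show j + 2 < Nat.fib (m + 5) by
        rw [show Nat.fib (m + 5) = Nat.fib (m + 3) + Nat.fib (m + 4) from Nat.fib_add_two]; omega)
    rw [goldenOrbit_add_fib, sub_eq_add_neg]
    refine fract_add_lt_iff_of_far h0 h1 h2 ?_
    rw [abs_neg, abs_goldenConj_pow]
    exact inv_goldenRatio_pow_lt_pow _

theorem fibWord_getD_eq_true_iff :
    ∀ m j, j < Phi m → ((fibWord m).getD j false = true ↔ goldenOrbit j < φ⁻¹ ^ 2)
  | 0, j, hj => by
    obtain rfl : j = 0 := by simpa [Phi, fibWord] using hj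
    rw [goldenOrbit_lt_inv_goldenRatio_sq_iff_of_le_four (by norm_num)]; decide
  | 1, j, hj => by
    obtain rfl | rfl : j = 0 ∨ j = 1 := by simp [Phi, fibWord] at hj; omega
    all_goals rw [goldenOrbit_lt_inv_goldenRatio_sq_iff_of_le_four (by norm_num)]; decide
  | m + 2, j, hj => by
    rw [Phi_add_two] at hj
    rw [fibWord]
    by_cases h : j < Phi (m + 1)
    · rw [List.getD_append _ _ _ _ h]
      exact fibWord_getD_eq_true_iff (m + 1) j h
    · obtain ⟨i, rfl⟩ := Nat.exists_eq_add_of_le (not_lt.mp h)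
      rw [List.getD_append_right _ _ _ _ (not_lt.mp h), Phi, Nat.add_sub_cancel_left,
        fibWord_getD_eq_true_iff m i (by omega), add_comm, ← Phi, Phi_eq_fib,
        goldenOrbit_add_fib_lt_iff (by rw [← Phi_eq_fib]; omega)]

theorem fibInf_eq_true_iff (n : ℕ) : fibInf n = true ↔ goldenOrbit n < φ⁻¹ ^ 2 :=
  fibWord_getD_eq_true_iff (n + 2) n (by rw [Phi_eq_fib]; linarith [Nat.le_fib_add_one (n + 4)])

end GoldenOrbit

section Recurrence

open Real

lemma fract_add_fib_mul_goldenRatio_of_even {k : ℕ} (hk : Even k) {x : ℝ}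
    (hx : φ⁻¹ ^ k ≤ Int.fract x) : Int.fract (x + Nat.fib k * φ) = Int.fract x - φ⁻¹ ^ k := by
  rw [Int.fract_eq_iff]
  refine ⟨by linarith, by linarith [Int.fract_lt_one x, pow_pos inv_goldenRatio_pos k],
    ⌊x⌋ + Nat.fib (k + 1), ?_⟩
  rw [fib_mul_goldenRatio, goldenConj_pow_of_even hk, Int.fract]
  push_cast
  ring

lemma exists_fract_add_mul_goldenRatio_lt_of_step {t c : ℝ} {L k N : ℕ} (hk : Even k)
    (hN : L + Nat.fib k < N) (h₁ : φ⁻¹ ^ k ≤ Int.fract (t + L * φ))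
    (h₂ : Int.fract (t + L * φ) < c + φ⁻¹ ^ k) : ∃ L' < N, Int.fract (t + L' * φ) < c := by
  refine ⟨L + Nat.fib k, hN, ?_⟩
  rw [Nat.cast_add, add_mul, ← add_assoc, fract_add_fib_mul_goldenRatio_of_even hk h₁]
  linarith

-- Only steps of length `fib k` with `k` even move the point down (by `φ⁻¹ ^ k`), so the
-- induction splits on the parity of `m`.
theorem exists_fract_add_mul_goldenRatio_lt :
    ∀ (m : ℕ) (t : ℝ), ∃ L < Nat.fib (m + 2), Int.fract (t + L * φ) < φ⁻¹ ^ m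
  | 0, t => ⟨0, by simp, by simpa using Int.fract_lt_one t⟩
  | 1, t => by
    by_cases h : Int.fract t < φ⁻¹
    · exact ⟨0, by simp [Nat.fib_add_two], by simpa using h⟩
    · refine exists_fract_add_mul_goldenRatio_lt_of_step (L := 0) (k := 2) even_two
        (by simp [Nat.fib_add_two]) ?_ ?_
      · have := inv_goldenRatio_pow_lt_pow 1
        simp only [CharP.cast_eq_zero, zero_mul, add_zero, pow_one] at this ⊢
        linarith
      · have := inv_goldenRatio_pow_add_two 0
        simp only [CharP.cast_eq_zero, zero_mul, add_zero, pow_one, pow_zero, zero_add] at this ⊢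
        linarith [Int.fract_lt_one t]
  | m + 2, t => by
    show ∃ L < Nat.fib (m + 4), _
    have hrec := inv_goldenRatio_pow_add_two
    have hlt := inv_goldenRatio_pow_lt_pow
    have hF4 : Nat.fib (m + 4) = Nat.fib (m + 2) + Nat.fib (m + 3) := Nat.fib_add_two
    have hF3 : Nat.fib (m + 3) = Nat.fib (m + 1) + Nat.fib (m + 2) := Nat.fib_add_two
    rcases Nat.even_or_odd m with hm | hm
    · obtain ⟨L, hL, hy⟩ := exists_fract_add_mul_goldenRatio_lt (m + 1) t
      replace hL : L < Nat.fib (m + 3) := hL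
      by_cases h : Int.fract (t + L * φ) < φ⁻¹ ^ (m + 2)
      · exact ⟨L, by omega, h⟩
      · refine exists_fract_add_mul_goldenRatio_lt_of_step (k := m + 2) (hm.add even_two)
          (by omega) (not_lt.mp h) ?_
        linarith [hrec (m + 1), hlt (m + 2)]
    · obtain ⟨L, hL, hy⟩ := exists_fract_add_mul_goldenRatio_lt m t
      by_cases h : Int.fract (t + L * φ) < φ⁻¹ ^ (m + 2)
      · exact ⟨L, by omega, h⟩
      by_cases h' : φ⁻¹ ^ (m + 1) ≤ Int.fract (t + L * φ)
      · refine exists_fract_add_mul_goldenRatio_lt_of_step (k := m + 1) hm.add_one (by omega) h'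
          ?_
        linarith [hrec m]
      · refine exists_fract_add_mul_goldenRatio_lt_of_step (L := L) (k := m + 3)
          (hm.add_one.add even_two) (by omega) (by linarith [hlt (m + 2)]) ?_
        linarith [hrec (m + 1)]

theorem exists_goldenOrbit_mem_Ico (a m : ℕ) {c : ℝ} (hc₀ : 0 ≤ c) (hc₁ : c + φ⁻¹ ^ m ≤ 1) :
    ∃ L < Nat.fib (m + 2), goldenOrbit (a + L) ∈ Set.Ico c (c + φ⁻¹ ^ m) := by
  obtain ⟨L, hL, hfract⟩ := exists_fract_add_mul_goldenRatio_lt m ((a + 1) * φ - c)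
  refine ⟨L, hL, ?_⟩
  set x := goldenOrbit (a + L)
  have hx₀ : 0 ≤ x := Int.fract_nonneg _
  have hx₁ : x < 1 := Int.fract_lt_one _
  have := pow_pos inv_goldenRatio_pos m
  have hshift : Int.fract ((a + 1) * φ - c + L * φ) = Int.fract (x - c) := by
    rw [Int.fract_eq_fract]
    exact ⟨⌊((a + L : ℕ) + 1 : ℝ) * φ⌋, by simp only [x, goldenOrbit, Int.fract]; push_cast; ring⟩
  rw [hshift] at hfract
  by_cases hcx : c ≤ x
  · rw [Int.fract_eq_self.mpr ⟨by linarith, by linarith⟩] at hfract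
    exact ⟨hcx, by linarith⟩
  · rw [(Int.fract_eq_iff.mpr ⟨by linarith, by linarith, -1, by push_cast; ring⟩ :
      Int.fract (x - c) = x - c + 1)] at hfract
    linarith

theorem exists_Ico_forall_lt_le_fract_add {δ ℓ β : ℝ} (hℓ : 0 ≤ ℓ) (hℓδ : ℓ < δ)
    (hδ : δ + ℓ ≤ 1) (hℓβ : ℓ ≤ β) (hβ : β + ℓ ≤ 1) :
    ∃ c, 0 ≤ c ∧ c + ℓ ≤ 1 ∧ ∀ x ∈ Set.Ico c (c + ℓ), x < β ∧ β ≤ Int.fract (x + δ) := by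
  rcases lt_or_ge δ β with hδβ | hβδ
  · refine ⟨β - δ, by linarith, by linarith, fun x hx ↦ ⟨by linarith [hx.2], ?_⟩⟩
    rw [Int.fract_eq_self.mpr ⟨by linarith [hx.1], by linarith [hx.2]⟩]
    linarith [hx.1]
  · refine ⟨0, le_rfl, by linarith, fun x hx ↦ ⟨by linarith [hx.2], ?_⟩⟩
    rw [Int.fract_eq_self.mpr ⟨by linarith [hx.1], by linarith [hx.2]⟩]
    linarith [hx.1]

theorem exists_fibInf_ne_of_fib_lt {s g : ℕ} (p : ℕ) (h₁ : Nat.fib (s + 2) < g)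
    (h₂ : g < Nat.fib (s + 3)) : ∃ j < Nat.fib (s + 2), fibInf (p + j) ≠ fibInf (p + g + j) := by
  obtain hs | hs := lt_or_ge s 2
  · interval_cases s <;> simp [Nat.fib_add_two] at h₁ h₂ <;> omega
  set δ := Int.fract ((g : ℝ) * φ)
  have hδ₁ : φ⁻¹ ^ s < δ := by
    have := inv_goldenRatio_pow_lt_abs_mul_goldenRatio_sub ⌊(g : ℝ) * φ⌋ h₁ h₂
    rwa [Int.self_sub_floor, abs_of_nonneg (Int.fract_nonneg _)] at this
  have hδ₂ : φ⁻¹ ^ s < 1 - δ := by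
    have := inv_goldenRatio_pow_lt_abs_mul_goldenRatio_sub (⌊(g : ℝ) * φ⌋ + 1) h₁ h₂
    rwa [Int.cast_add, Int.cast_one, ← sub_sub, Int.self_sub_floor, abs_of_neg
      (by linarith [Int.fract_lt_one ((g : ℝ) * φ)]), neg_sub] at this
  have hℓβ : φ⁻¹ ^ s ≤ φ⁻¹ ^ 2 :=
    pow_le_pow_of_le_one inv_goldenRatio_pos.le inv_goldenRatio_lt_one.le hs
  obtain ⟨c, hc₀, hc₁, hc⟩ := exists_Ico_forall_lt_le_fract_add
    (pow_nonneg inv_goldenRatio_pos.le s) hδ₁ (by linarith) hℓβ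
    (by rw [inv_goldenRatio_sq]; linarith [goldenRatio_bounds.1])
  obtain ⟨L, hL, hx⟩ := exists_goldenOrbit_mem_Ico p s hc₀ hc₁
  refine ⟨L, hL, fun heq ↦ ?_⟩
  obtain ⟨htrue, hfalse⟩ := hc _ hx
  rw [← fibInf_eq_true_iff, heq, fibInf_eq_true_iff, add_right_comm, goldenOrbit_add] at htrue
  exact (not_lt.mpr hfalse) htrue

end Recurrence

lemma shortBordLen_spec {α : Type*} {w : List α} (h : 0 < shortBordLen w) :
    w.take (shortBordLen w) <:+ w ∧ 2 * shortBordLen w < w.length := by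
  have hne : {j | w.take j <:+ w ∧ 2 * j < w.length}.Nonempty := by
    by_contra hempty
    rw [Set.not_nonempty_iff_eq_empty] at hempty
    simp [shortBordLen, hempty] at h
  exact Nat.sSup_mem hne ⟨w.length, fun j hj ↦ by have := hj.2; omega⟩

lemma fibOccursAt.getElem_eq {w : List Bool} {i : ℕ} (h : fibOccursAt w i) {x : ℕ}
    (hx : x < w.length) : w[x] = fibInf (i + x) := by
  rw [List.getElem_of_eq h]
  simp

lemma fibOccursAt.fibInf_eq_of_take_isSuffix {w : List Bool} {i j : ℕ} (h : fibOccursAt w i)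
    (hsuf : w.take j <:+ w) (hj : j ≤ w.length) {x : ℕ} (hx : x < j) :
    fibInf (i + x) = fibInf (i + (w.length - j) + x) := by
  have hx' : x < (w.take j).length := by simpa [hj] using hx
  have := hsuf.getElem hx'
  rw [List.getElem_take, h.getElem_eq, h.getElem_eq] at this
  simpa [hj, add_assoc] using this

theorem shortBordLen_fibFactor_general (k : ℕ) (w : List Bool)
    (hf : IsFibFactor w) (hlen : w.length < Phi k) :
    shortBordLen w < Phi (k - 2) := by
  obtain ⟨i, hi⟩ := hf
  by_contra! hbig
  rw [Phi_eq_fib] at hbig hlen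
  obtain ⟨hsuf, hj⟩ := shortBordLen_spec (hbig.trans_lt' (Nat.fib_pos.mpr (by omega)))
  set j := shortBordLen w
  have hfib : Nat.fib (k + 2) ≤ Nat.fib (k - 2 + 2) + Nat.fib (k - 2 + 3) := by
    rw [← Nat.fib_add_two]; exact Nat.fib_mono (by omega)
  obtain ⟨x, hx, hne⟩ := exists_fibInf_ne_of_fib_lt (s := k - 2) (g := w.length - j) i
    (by omega) (by omega)
  exact hne (hi.fibInf_eq_of_take_isSuffix hsuf (by omega) (by omega))

/-- Lemma 6: any nonempty factor `w` of the infinite Fibonacci word with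
`|w| < Φ_k` (`k ≥ 2`) satisfies `|ShortBord(w)| < Φ_{k-2}`. -/
theorem shortBordLen_fibFactor (k : ℕ) (hk : 2 ≤ k) (w : List Bool)
    (hw : w ≠ []) (hf : IsFibFactor w) (hlen : w.length < Phi k) :
    shortBordLen w < Phi (k - 2) :=
  shortBordLen_fibFactor_general k w hf hlen
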